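/- Tame inversion of a diagonal operator with nonresonant eigenvalues: let d ≥ 1, τ > 0, γ > 0, ω ∈ ℝ^d, and let μ_j ∈ ℂ (j ∈ ℤ_{≥1}) satisfy the first Melnikov conditions |iω·ℓ + μ_j| ≥ 2γ j² ⟨ℓ⟩^{−τ} for all ℓ ∈ ℤ^d and j ≥ 1. Given g : ℤ^d × ℤ_{≥1} → ℂ, define h : ℤ^d × ℤ_{≥1} → ℂ by h_j(ℓ) := g_j(ℓ)/(iω·ℓ + μ_j). Then for every s ≥ 0: ‖h‖_s ≤ (2γ)^{−1} ‖g‖_{s+τ}. -/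

import Mathlib

open scoped ENNReal NNReal

/-- The weight `⟨(ℓ,j)⟩ = max(1, max(|ℓ|, j))` with `|ℓ|` the sup norm. -/
noncomputable def wgtLJ {d : ℕ} (ℓ : Fin d → ℤ) (j : ℕ) : ℝ≥0∞ :=
  ((max 1 (max (Finset.univ.sup fun i => (ℓ i).natAbs) j) : ℕ) : ℝ≥0∞)

/-- The weighted ℓ² norm `‖u‖ₛ = (Σ_{ℓ∈ℤᵈ, j≥1} ⟨(ℓ,j)⟩^{2s}|u_j(ℓ)|²)^{1/2}`. -/
noncomputable def wnormLJ (d : ℕ) (s : ℝ) (u : (Fin d → ℤ) → ℕ → ℂ) : ℝ≥0∞ :=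
  (∑' p : (Fin d → ℤ) × {j : ℕ // 1 ≤ j},
      wgtLJ p.1 (p.2 : ℕ) ^ (2 * s) * (‖u p.1 (p.2 : ℕ)‖₊ : ℝ≥0∞) ^ (2 : ℕ)) ^ (1 / 2 : ℝ)

/-!
The Melnikov condition with `j² ≥ 1` gives `|h_j(ℓ)| ≤ (2γ)⁻¹ ⟨ℓ⟩^τ |g_j(ℓ)|`
coefficientwise, and `⟨ℓ⟩ ≤ ⟨(ℓ,j)⟩`. Squaring, multiplying by `⟨(ℓ,j)⟩^{2s}` and summing
turns this pointwise bound into the bound on the weighted norms.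
-/

section Weight

variable {d : ℕ} (ℓ : Fin d → ℤ) (j : ℕ)

theorem wgtLJ_ne_zero : wgtLJ ℓ j ≠ 0 := by
  simp [wgtLJ]

theorem wgtLJ_ne_top : wgtLJ ℓ j ≠ ⊤ := by
  simp [wgtLJ]

theorem max_one_sup_natAbs_le_wgtLJ :
    ((max 1 (Finset.univ.sup fun i => (ℓ i).natAbs) : ℕ) : ℝ≥0∞) ≤ wgtLJ ℓ j := by
  unfold wgtLJ
  exact_mod_cast max_le_max le_rfl (le_max_left _ _)

theorem wgtLJ_rpow_sq (s τ : ℝ) :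
    wgtLJ ℓ j ^ (2 * s) * (wgtLJ ℓ j ^ τ) ^ (2 : ℕ) = wgtLJ ℓ j ^ (2 * (s + τ)) := by
  rw [← ENNReal.rpow_natCast, ← ENNReal.rpow_mul,
    ← ENNReal.rpow_add _ _ (wgtLJ_ne_zero ℓ j) (wgtLJ_ne_top ℓ j)]
  ring_nf

end Weight

theorem wnormLJ_le_mul_of_forall_le {d : ℕ} (s τ : ℝ) (C : ℝ≥0∞) (g h : (Fin d → ℤ) → ℕ → ℂ)
    (hgh : ∀ (ℓ : Fin d → ℤ) (j : ℕ), 1 ≤ j →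
      (‖h ℓ j‖₊ : ℝ≥0∞) ≤ C * (wgtLJ ℓ j ^ τ * ‖g ℓ j‖₊)) :
    wnormLJ d s h ≤ C * wnormLJ d (s + τ) g := by
  have hterm : ∀ p : (Fin d → ℤ) × {j : ℕ // 1 ≤ j},
      wgtLJ p.1 p.2 ^ (2 * s) * (‖h p.1 p.2‖₊ : ℝ≥0∞) ^ (2 : ℕ) ≤
        C ^ (2 : ℕ) * (wgtLJ p.1 p.2 ^ (2 * (s + τ)) * (‖g p.1 p.2‖₊ : ℝ≥0∞) ^ (2 : ℕ)) := by
    rintro ⟨ℓ, j, hj⟩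
    calc wgtLJ ℓ j ^ (2 * s) * (‖h ℓ j‖₊ : ℝ≥0∞) ^ (2 : ℕ)
        ≤ wgtLJ ℓ j ^ (2 * s) * (C * (wgtLJ ℓ j ^ τ * ‖g ℓ j‖₊)) ^ (2 : ℕ) := by
          gcongr
          exact hgh ℓ j hj
      _ = C ^ (2 : ℕ) * ((wgtLJ ℓ j ^ (2 * s) * (wgtLJ ℓ j ^ τ) ^ (2 : ℕ)) *
            (‖g ℓ j‖₊ : ℝ≥0∞) ^ (2 : ℕ)) := by ring
      _ = _ := by rw [wgtLJ_rpow_sq]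
  have hsqrt : (C ^ (2 : ℕ)) ^ (1 / 2 : ℝ) = C := by
    simpa using ENNReal.pow_rpow_inv_natCast two_ne_zero C
  unfold wnormLJ
  calc _ ≤ (C ^ (2 : ℕ) * ∑' p : (Fin d → ℤ) × {j : ℕ // 1 ≤ j},
          wgtLJ p.1 p.2 ^ (2 * (s + τ)) * (‖g p.1 p.2‖₊ : ℝ≥0∞) ^ (2 : ℕ)) ^ (1 / 2 : ℝ) := by
        rw [← ENNReal.tsum_mul_left]
        exact ENNReal.rpow_le_rpow (ENNReal.tsum_le_tsum hterm) (by norm_num)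
    _ = _ := by rw [ENNReal.mul_rpow_of_nonneg _ _ (by norm_num), hsqrt]

theorem norm_div_le_of_melnikov {γ τ A : ℝ} (hγ : 0 < γ) (hA : 0 < A) {j : ℕ} (hj : 1 ≤ j)
    (z w : ℂ) (hw : 2 * γ * (j : ℝ) ^ 2 / A ^ τ ≤ ‖w‖) :
    ‖z / w‖ ≤ 1 / (2 * γ) * (A ^ τ * ‖z‖) := by
  have hAτ : 0 < A ^ τ := Real.rpow_pos_of_pos hA τ
  have hj2 : (1 : ℝ) ≤ (j : ℝ) ^ 2 := one_le_pow₀ (by exact_mod_cast hj)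
  have hw' : 2 * γ / A ^ τ ≤ ‖w‖ :=
    (div_le_div_of_nonneg_right (le_mul_of_one_le_right (by positivity) hj2) hAτ.le).trans hw
  rw [norm_div]
  refine (div_le_div_of_nonneg_left (norm_nonneg z) (by positivity) hw').trans_eq ?_
  field_simp

theorem diagonal_tame_inversion_general (d : ℕ) (τ γ : ℝ) (hτ : 0 < τ) (hγ : 0 < γ)
    (ω : Fin d → ℝ) (μ : ℕ → ℂ)
    (hmel : ∀ (ℓ : Fin d → ℤ) (j : ℕ), 1 ≤ j →
      2 * γ * (j : ℝ) ^ 2 / ((max 1 (Finset.univ.sup fun i => (ℓ i).natAbs) : ℕ) : ℝ) ^ τ ≤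
        ‖Complex.I * ((∑ i, ω i * (ℓ i : ℝ) : ℝ) : ℂ) + μ j‖)
    (g h : (Fin d → ℤ) → ℕ → ℂ)
    (hh : ∀ (ℓ : Fin d → ℤ) (j : ℕ), 1 ≤ j →
      h ℓ j = g ℓ j / (Complex.I * ((∑ i, ω i * (ℓ i : ℝ) : ℝ) : ℂ) + μ j)) :
    ∀ s : ℝ, 0 ≤ s →
      wnormLJ d s h ≤ ENNReal.ofReal (1 / (2 * γ)) * wnormLJ d (s + τ) g := by
  intro s _
  refine wnormLJ_le_mul_of_forall_le s τ _ g h fun ℓ j hj => ?_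
  set A : ℕ := max 1 (Finset.univ.sup fun i => (ℓ i).natAbs)
  have hA : (0 : ℝ) < A := by positivity
  have hreal : ‖h ℓ j‖ ≤ 1 / (2 * γ) * ((A : ℝ) ^ τ * ‖g ℓ j‖) := by
    rw [hh ℓ j hj]
    exact norm_div_le_of_melnikov hγ hA hj _ _ (hmel ℓ j hj)
  have hAW : ENNReal.ofReal ((A : ℝ) ^ τ) ≤ wgtLJ ℓ j ^ τ := by
    rw [← ENNReal.ofReal_rpow_of_pos hA, ENNReal.ofReal_natCast]
    exact ENNReal.rpow_le_rpow (max_one_sup_natAbs_le_wgtLJ ℓ j) hτ.le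
  calc (‖h ℓ j‖₊ : ℝ≥0∞) = ENNReal.ofReal ‖h ℓ j‖ := (ofReal_norm _).symm
    _ ≤ ENNReal.ofReal (1 / (2 * γ)) * (ENNReal.ofReal ((A : ℝ) ^ τ) * ENNReal.ofReal ‖g ℓ j‖) := by
        rw [← ENNReal.ofReal_mul (by positivity), ← ENNReal.ofReal_mul (by positivity)]
        exact ENNReal.ofReal_le_ofReal hreal
    _ ≤ _ := by
        rw [ofReal_norm, enorm_eq_nnnorm]
        gcongr

/-- Tame inversion of a diagonal operator with nonresonant eigenvalues: if the
first Melnikov conditions `|iω·ℓ + μ_j| ≥ 2γ j² ⟨ℓ⟩^{−τ}` hold and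
`h_j(ℓ) = g_j(ℓ)/(iω·ℓ + μ_j)`, then `‖h‖ₛ ≤ (2γ)⁻¹ ‖g‖_{s+τ}` for every `s ≥ 0`. -/
theorem diagonal_tame_inversion (d : ℕ) (hd : 1 ≤ d) (τ γ : ℝ) (hτ : 0 < τ) (hγ : 0 < γ)
    (ω : Fin d → ℝ) (μ : ℕ → ℂ)
    (hmel : ∀ (ℓ : Fin d → ℤ) (j : ℕ), 1 ≤ j →
      2 * γ * (j : ℝ) ^ 2 / ((max 1 (Finset.univ.sup fun i => (ℓ i).natAbs) : ℕ) : ℝ) ^ τ ≤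
        ‖Complex.I * ((∑ i, ω i * (ℓ i : ℝ) : ℝ) : ℂ) + μ j‖)
    (g h : (Fin d → ℤ) → ℕ → ℂ)
    (hh : ∀ (ℓ : Fin d → ℤ) (j : ℕ), 1 ≤ j →
      h ℓ j = g ℓ j / (Complex.I * ((∑ i, ω i * (ℓ i : ℝ) : ℝ) : ℂ) + μ j)) :
    ∀ s : ℝ, 0 ≤ s →
      wnormLJ d s h ≤ ENNReal.ofReal (1 / (2 * γ)) * wnormLJ d (s + τ) g :=
  diagonal_tame_inversion_general d τ γ hτ hγ ω μ hmel g h hh
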